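/- Let 0 < t < t' < 1, and define N_t = { f_j(t) : j ∈ ℕ* } where f_j(s) = ∏_{i=1}^{j} e_i(s) and e_i(s) is the largest prime ≤ s^{-i} (or 2 if s^{-i} < 2). Then N_t ∩ N_{t'} is finite. -/

import Mathlib

/-!
`f_t(j)` is a product of `j` primes, so its number of prime factors `Ω` recovers `j` and a common
value `f_t(j) = f_{t'}(j')` forces `j = j'`. Since `t⁻ʲ ≥ 2 t'⁻ʲ` for large `j`, Bertrand's postulate gives
`e_j(t) > e_j(t')` eventually, while `e_i(t) ≥ e_i(t')` always; hence `f_t(j) > f_{t'}(j)` for all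
large `j`, and only finitely many `j` can produce a common value.
-/

/-- `ee t j` is the largest prime `p` with `(p : ℝ) ≤ t⁻ʲ` if `2 ≤ t⁻ʲ`, and `2` otherwise. -/
noncomputable def ee (t : ℝ) (j : ℕ) : ℕ :=
  if 2 ≤ (t ^ j)⁻¹ then sSup {p : ℕ | p.Prime ∧ (p : ℝ) ≤ (t ^ j)⁻¹} else 2

/-- `ff t j = ∏_{i=1}^j ee t i`. -/
noncomputable def ff (t : ℝ) (j : ℕ) : ℕ := ∏ i ∈ Finset.Icc 1 j, ee t i

open Filter ArithmeticFunction
open scoped ArithmeticFunction.Omega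

noncomputable def primeFloor (x : ℝ) : ℕ := sSup {p : ℕ | p.Prime ∧ (p : ℝ) ≤ x}

lemma bddAbove_primes_le (x : ℝ) : BddAbove {p : ℕ | p.Prime ∧ (p : ℝ) ≤ x} :=
  ⟨⌈x⌉₊, fun _ hp => by exact_mod_cast hp.2.trans (Nat.le_ceil x)⟩

lemma le_primeFloor {p : ℕ} {x : ℝ} (hp : p.Prime) (hpx : (p : ℝ) ≤ x) : p ≤ primeFloor x :=
  le_csSup (bddAbove_primes_le x) ⟨hp, hpx⟩

lemma primeFloor_spec {x : ℝ} (hx : 2 ≤ x) : (primeFloor x).Prime ∧ (primeFloor x : ℝ) ≤ x :=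
  Nat.sSup_mem (s := {p : ℕ | p.Prime ∧ (p : ℝ) ≤ x}) ⟨2, Nat.prime_two, by exact_mod_cast hx⟩
    (bddAbove_primes_le x)

lemma primeFloor_mono {x y : ℝ} (hx : 2 ≤ x) (hxy : x ≤ y) : primeFloor x ≤ primeFloor y :=
  le_primeFloor (primeFloor_spec hx).1 ((primeFloor_spec hx).2.trans hxy)

lemma primeFloor_lt_primeFloor {x y : ℝ} (hx : 2 ≤ x) (hxy : 2 * x ≤ y) :
    primeFloor x < primeFloor y := by
  obtain ⟨hq, hqx⟩ := primeFloor_spec hx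
  obtain ⟨p, hp, hqp, hp2q⟩ := Nat.exists_prime_lt_and_le_two_mul _ hq.ne_zero
  refine hqp.trans_le (le_primeFloor hp ?_)
  calc (p : ℝ) ≤ 2 * primeFloor x := by exact_mod_cast hp2q
    _ ≤ 2 * x := by gcongr
    _ ≤ y := hxy

lemma ee_eq_primeFloor {t : ℝ} {j : ℕ} (h : 2 ≤ (t ^ j)⁻¹) : ee t j = primeFloor (t ^ j)⁻¹ :=
  if_pos h

lemma ee_prime (t : ℝ) (j : ℕ) : (ee t j).Prime := by
  by_cases h : 2 ≤ (t ^ j)⁻¹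
  · exact ee_eq_primeFloor h ▸ (primeFloor_spec h).1
  · simpa [ee, h] using Nat.prime_two

lemma ee_anti {t t' : ℝ} (ht : 0 < t) (htt' : t ≤ t') (j : ℕ) : ee t' j ≤ ee t j := by
  by_cases h : 2 ≤ (t' ^ j)⁻¹
  · have hle : (t' ^ j)⁻¹ ≤ (t ^ j)⁻¹ := inv_anti₀ (by positivity) (by gcongr)
    rw [ee_eq_primeFloor h, ee_eq_primeFloor (h.trans hle)]
    exact primeFloor_mono h hle
  · simpa [ee, h] using (ee_prime t j).two_le

lemma ee_lt_ee {t t' : ℝ} {j : ℕ} (h : 2 ≤ (t' ^ j)⁻¹) (hgap : 2 * (t' ^ j)⁻¹ ≤ (t ^ j)⁻¹) :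
    ee t' j < ee t j := by
  rw [ee_eq_primeFloor h, ee_eq_primeFloor (by linarith)]
  exact primeFloor_lt_primeFloor h hgap

lemma cardFactors_prod_of_prime {ι : Type*} {s : Finset ι} {f : ι → ℕ}
    (hf : ∀ i ∈ s, (f i).Prime) : Ω (∏ i ∈ s, f i) = s.card := by
  rw [Finset.prod_eq_multiset_prod, cardFactors_multiset_prod, Multiset.map_map, Function.comp_def,
    Multiset.map_congr rfl fun i hi => cardFactors_apply_prime (hf i hi)]
  · simp
  · exact Multiset.prod_ne_zero fun h0 => by
      obtain ⟨i, hi, hi0⟩ := Multiset.mem_map.1 h0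
      exact (hf i hi).ne_zero hi0

lemma cardFactors_ff (t : ℝ) (j : ℕ) : Ω (ff t j) = j := by
  simp [ff, cardFactors_prod_of_prime fun i _ => ee_prime t i]

lemma ff_lt_ff {t t' : ℝ} {j : ℕ} (ht : 0 < t) (htt' : t ≤ t') (hj : 1 ≤ j)
    (h : 2 ≤ (t' ^ j)⁻¹) (hgap : 2 * (t' ^ j)⁻¹ ≤ (t ^ j)⁻¹) : ff t' j < ff t j :=
  Finset.prod_lt_prod (fun i _ => (ee_prime t' i).pos) (fun i _ => ee_anti ht htt' i)
    ⟨j, Finset.mem_Icc.2 ⟨hj, le_rfl⟩, ee_lt_ee h hgap⟩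

lemma eventually_two_le_inv_pow {t : ℝ} (ht : 0 < t) (ht1 : t < 1) :
    ∀ᶠ j in atTop, 2 ≤ (t ^ j)⁻¹ := by
  simpa only [inv_pow] using
    (tendsto_pow_atTop_atTop_of_one_lt ((one_lt_inv₀ ht).2 ht1)).eventually_ge_atTop 2

lemma eventually_two_mul_inv_pow_le {t t' : ℝ} (ht : 0 < t) (htt' : t < t') :
    ∀ᶠ j in atTop, 2 * (t' ^ j)⁻¹ ≤ (t ^ j)⁻¹ := by
  have ht' : 0 < t' := ht.trans htt'
  filter_upwards [(tendsto_pow_atTop_atTop_of_one_lt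
    ((one_lt_div ht).2 htt')).eventually_ge_atTop 2] with j hj
  rw [div_pow, le_div_iff₀ (by positivity)] at hj
  rw [← div_eq_mul_inv, div_le_iff₀ (by positivity), ← div_eq_inv_mul, le_div_iff₀ (by positivity)]
  exact hj

theorem Nt_inter_finite (t t' : ℝ) (h0 : 0 < t) (htt' : t < t') (h1 : t' < 1) :
    ({n : ℕ | ∃ j, 1 ≤ j ∧ ff t j = n} ∩ {n : ℕ | ∃ j, 1 ≤ j ∧ ff t' j = n}).Finite := by
  obtain ⟨J, hJ⟩ := eventually_atTop.1
    ((eventually_two_le_inv_pow (h0.trans htt') h1).and (eventually_two_mul_inv_pow_le h0 htt'))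
  refine ((Set.finite_Iio J).image (ff t')).subset ?_
  rintro n ⟨⟨j, hj, rfl⟩, ⟨j', -, hj'⟩⟩
  obtain rfl : j' = j := by rw [← cardFactors_ff t' j', hj', cardFactors_ff]
  refine ⟨j', Set.mem_Iio.2 (not_le.1 fun hJj => ?_), hj'⟩
  exact (ff_lt_ff h0 htt'.le hj (hJ j' hJj).1 (hJ j' hJj).2).ne hj'
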